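/- The function g : (1,∞) → ℝ defined by g(x) = ( (2^{2+x}−1)·ζ(x+2) ) / ( (2^{4+x}−1)·(2+x)·(3+x)·ζ(x+4) ) is strictly decreasing; in particular, there exists no pair (n,m) with n > m > 1 such that g(n) = g(m). -/

import Mathlib

/-!
Removing the even terms, `(2^s - 1) ζ(s) = 2^s λ(s)` with `λ(s) = ∑ (2k+1)^{-s}`, so
`g(x) = λ(x+2) / (4 λ(x+4) (x+2)(x+3))`. The ratio `λ(s)/λ(s+2)` is non-increasing because
`λ` is log-convex (a Chebyshev sum inequality for the two antitone maps `t ↦ t^{-(y-x)}` and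
`t ↦ t^{-2}`), while `(x+2)(x+3)` is strictly increasing.
-/

open Real Filter

/-- The Riemann zeta function `ζ(s) = Σ_{j=1}^∞ j^{-s}` for real `s > 1`. -/
noncomputable def rzeta (s : ℝ) : ℝ := ∑' j : ℕ, ((j : ℝ) + 1) ^ (-s)

/-- The auxiliary function `g(x) = ((2^{2+x}−1)·ζ(x+2)) / ((2^{4+x}−1)·(2+x)·(3+x)·ζ(x+4))`
appearing in the proof of the absence of a tricritical point. -/
noncomputable def g (x : ℝ) : ℝ :=
  ((2 ^ (2 + x) - 1) * rzeta (x + 2)) /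
    ((2 ^ (4 + x) - 1) * (2 + x) * (3 + x) * rzeta (x + 4))

noncomputable def dirichletLambda (s : ℝ) : ℝ := ∑' k : ℕ, (2 * (k : ℝ) + 1) ^ (-s)

lemma summable_nat_add_one_rpow_neg {s : ℝ} (hs : 1 < s) :
    Summable fun j : ℕ => ((j : ℝ) + 1) ^ (-s) := by
  have h : Summable fun n : ℕ => (n : ℝ) ^ (-s) := summable_nat_rpow.mpr (by linarith)
  simpa using (summable_nat_add_iff 1).mpr h

lemma summable_two_mul_nat_add_one_rpow_neg {s : ℝ} (hs : 1 < s) :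
    Summable fun k : ℕ => (2 * (k : ℝ) + 1) ^ (-s) :=
  (summable_nat_add_one_rpow_neg hs).of_nonneg_of_le (fun _ => by positivity) fun k =>
    rpow_le_rpow_of_nonpos (by positivity) (by linarith [k.cast_nonneg (α := ℝ)]) (by linarith)

lemma rzeta_pos {s : ℝ} (hs : 1 < s) : 0 < rzeta s :=
  (summable_nat_add_one_rpow_neg hs).tsum_pos (fun _ => by positivity) 0 (by norm_num)

lemma dirichletLambda_pos {s : ℝ} (hs : 1 < s) : 0 < dirichletLambda s :=
  (summable_two_mul_nat_add_one_rpow_neg hs).tsum_pos (fun _ => by positivity) 0 (by norm_num)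

/-- Splitting `ζ(s)` into odd and even terms gives `ζ(s) = λ(s) + 2^{-s} ζ(s)`. -/
lemma two_rpow_sub_one_mul_rzeta {s : ℝ} (hs : 1 < s) :
    (2 ^ s - 1) * rzeta s = 2 ^ s * dirichletLambda s := by
  have heven : ∀ k : ℕ, (((2 * k : ℕ) : ℝ) + 1) ^ (-s) = (2 * (k : ℝ) + 1) ^ (-s) := by
    intro k; push_cast; rfl
  have hodd : ∀ k : ℕ, (((2 * k + 1 : ℕ) : ℝ) + 1) ^ (-s) = 2 ^ (-s) * ((k : ℝ) + 1) ^ (-s) := by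
    intro k
    rw [← mul_rpow (by norm_num) (by positivity)]
    push_cast
    ring_nf
  have hsplit := tsum_even_add_odd (f := fun j : ℕ => ((j : ℝ) + 1) ^ (-s))
    ((summable_two_mul_nat_add_one_rpow_neg hs).congr fun k => (heven k).symm)
    (((summable_nat_add_one_rpow_neg hs).mul_left _).congr fun k => (hodd k).symm)
  simp only [heven, hodd, tsum_mul_left] at hsplit
  have h2 : (2 : ℝ) ^ s * 2 ^ (-s) = 1 := by
    rw [rpow_neg (by norm_num), mul_inv_cancel₀ (by positivity)]
  rw [rzeta, dirichletLambda]
  linear_combination (-(2 : ℝ) ^ s) * hsplit + (∑' j : ℕ, ((j : ℝ) + 1) ^ (-s)) * h2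

lemma g_eq_dirichletLambda_div {x : ℝ} (hx : -1 < x) :
    g x = dirichletLambda (x + 2) / dirichletLambda (x + 2 + 2) / (4 * ((x + 2) * (x + 3))) := by
  have h2 := two_rpow_sub_one_mul_rzeta (s := x + 2) (by linarith)
  have h4 := two_rpow_sub_one_mul_rzeta (s := x + 2 + 2) (by linarith)
  have hpow : (2 : ℝ) ^ (x + 2 + 2) = 2 ^ (x + 2) * 4 := by
    rw [rpow_add two_pos]; norm_num
  have hz := rzeta_pos (s := x + 2 + 2) (by linarith)
  have hl := dirichletLambda_pos (s := x + 2 + 2) (by linarith)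
  rw [g, show (4 : ℝ) + x = x + 2 + 2 by ring, add_comm (2 : ℝ) x, add_comm (3 : ℝ) x,
    show x + 4 = x + 2 + 2 by ring,
    show (2 ^ (x + 2 + 2) - 1) * (x + 2) * (x + 3) * rzeta (x + 2 + 2)
      = (2 ^ (x + 2 + 2) - 1) * rzeta (x + 2 + 2) * ((x + 2) * (x + 3)) by ring, h2, h4, hpow]
  have : (0 : ℝ) < 2 ^ (x + 2) := by positivity
  have : (0 : ℝ) < x + 2 := by linarith
  have : (0 : ℝ) < x + 3 := by linarith
  field_simp

lemma rpow_neg_add_rpow_neg_le {a b x y c : ℝ} (ha : 0 < a) (hb : 0 < b) (hxy : x ≤ y)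
    (hc : 0 ≤ c) :
    a ^ (-y) * b ^ (-(x + c)) + b ^ (-y) * a ^ (-(x + c)) ≤
      a ^ (-x) * b ^ (-(y + c)) + b ^ (-x) * a ^ (-(y + c)) := by
  have hsplit : ∀ t : ℝ, 0 < t → t ^ (-y) = t ^ (-x) * t ^ (-(y - x)) ∧
      t ^ (-(x + c)) = t ^ (-x) * t ^ (-c) ∧
      t ^ (-(y + c)) = t ^ (-x) * t ^ (-(y - x)) * t ^ (-c) := by
    intro t ht
    simp only [← rpow_add ht]
    exact ⟨by ring_nf, by ring_nf, by ring_nf⟩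
  obtain ⟨ay, axc, ayc⟩ := hsplit a ha
  obtain ⟨by', bxc, byc⟩ := hsplit b hb
  -- both `t ↦ t ^ (-(y - x))` and `t ↦ t ^ (-c)` are antitone, so their increments have the same sign
  have hsame : 0 ≤ (a ^ (-(y - x)) - b ^ (-(y - x))) * (a ^ (-c) - b ^ (-c)) := by
    rcases le_total a b with hab | hab
    · exact mul_nonneg (sub_nonneg.2 (rpow_le_rpow_of_nonpos ha hab (by linarith)))
        (sub_nonneg.2 (rpow_le_rpow_of_nonpos ha hab (by linarith)))
    · exact mul_nonneg_of_nonpos_of_nonpos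
        (sub_nonpos.2 (rpow_le_rpow_of_nonpos hb hab (by linarith)))
        (sub_nonpos.2 (rpow_le_rpow_of_nonpos hb hab (by linarith)))
  rw [ay, axc, ayc, by', bxc, byc]
  have : 0 ≤ a ^ (-x) * b ^ (-x) := by positivity
  linear_combination mul_nonneg this hsame

/-- The log-convexity of `s ↦ ∑' i, a i ^ (-s)`: symmetrising the double series over `ι × ι`
reduces it to `rpow_neg_add_rpow_neg_le` termwise. -/
theorem tsum_rpow_neg_mul_tsum_rpow_neg_le {ι : Type*} {a : ι → ℝ} (ha : ∀ i, 0 < a i)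
    {x y c : ℝ} (hxy : x ≤ y) (hc : 0 ≤ c) (hx : Summable fun i => a i ^ (-x))
    (hy : Summable fun i => a i ^ (-y)) (hxc : Summable fun i => a i ^ (-(x + c)))
    (hyc : Summable fun i => a i ^ (-(y + c))) :
    (∑' i, a i ^ (-y)) * ∑' i, a i ^ (-(x + c)) ≤
      (∑' i, a i ^ (-x)) * ∑' i, a i ^ (-(y + c)) := by
  set F : ι × ι → ℝ := fun p => a p.1 ^ (-y) * a p.2 ^ (-(x + c))
  set G : ι × ι → ℝ := fun p => a p.1 ^ (-x) * a p.2 ^ (-(y + c))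
  have hpos (s : ℝ) (i : ι) : 0 ≤ a i ^ s := (rpow_pos_of_pos (ha i) s).le
  have hF : Summable F := hy.mul_of_nonneg hxc (hpos _) (hpos _)
  have hG : Summable G := hx.mul_of_nonneg hyc (hpos _) (hpos _)
  have hswap (H : ι × ι → ℝ) : ∑' p : ι × ι, H p.swap = ∑' p, H p :=
    (Equiv.prodComm ι ι).tsum_eq H
  have hsym : ∑' p : ι × ι, (F p + F p.swap) ≤ ∑' p, (G p + G p.swap) :=
    (hF.add hF.prod_symm).tsum_le_tsum (fun p => rpow_neg_add_rpow_neg_le (ha _) (ha _) hxy hc)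
      (hG.add hG.prod_symm)
  rw [hF.tsum_add hF.prod_symm, hG.tsum_add hG.prod_symm, hswap, hswap] at hsym
  rw [hy.tsum_mul_tsum hxc hF, hx.tsum_mul_tsum hyc hG]
  linarith

lemma antitoneOn_dirichletLambda_div {c : ℝ} (hc : 0 ≤ c) :
    AntitoneOn (fun s => dirichletLambda s / dirichletLambda (s + c)) (Set.Ioi 1) := by
  intro x hx y hy hxy
  have hx' : (1 : ℝ) < x := hx
  have hy' : (1 : ℝ) < y := hy
  rw [div_le_div_iff₀ (dirichletLambda_pos (by linarith)) (dirichletLambda_pos (by linarith))]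
  exact tsum_rpow_neg_mul_tsum_rpow_neg_le (fun _ => by positivity) hxy hc
    (summable_two_mul_nat_add_one_rpow_neg hx') (summable_two_mul_nat_add_one_rpow_neg hy')
    (summable_two_mul_nat_add_one_rpow_neg (by linarith))
    (summable_two_mul_nat_add_one_rpow_neg (by linarith))

/-- The function `g` is strictly decreasing on `(1,∞)`; in particular there is
no pair `(n,m)` with `n > m > 1` such that `g(n) = g(m)`. -/
theorem g_strictAntiOn_and_injective :
    StrictAntiOn g (Set.Ioi (1 : ℝ)) ∧
    ¬ ∃ n m : ℝ, 1 < m ∧ m < n ∧ g n = g m := by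
  have anti : StrictAntiOn g (Set.Ioi 1) := by
    intro x (hx : 1 < x) y (hy : 1 < y) hxy
    have hratio : 0 < dirichletLambda (y + 2) / dirichletLambda (y + 2 + 2) :=
      div_pos (dirichletLambda_pos (by linarith)) (dirichletLambda_pos (by linarith))
    rw [g_eq_dirichletLambda_div (by linarith), g_eq_dirichletLambda_div (by linarith)]
    calc _ < dirichletLambda (y + 2) / dirichletLambda (y + 2 + 2) / (4 * ((x + 2) * (x + 3))) :=
          div_lt_div_of_pos_left hratio (by positivity) (by nlinarith)
      _ ≤ _ := div_le_div_of_nonneg_right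
          (antitoneOn_dirichletLambda_div zero_le_two (Set.mem_Ioi.2 (by linarith))
            (Set.mem_Ioi.2 (by linarith)) (by linarith)) (by positivity)
  exact ⟨anti, fun ⟨n, m, hm, hmn, h⟩ => hmn.ne' (anti.injOn (hm.trans hmn) hm h)⟩
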